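/- arXiv:1004.4391 — 5 statements merged into one kernel-verified Lean document; each statement's English description precedes it below -/
import Mathlib

section
/- Wald's identity for non-identically distributed summands: Let X₁, X₂, … be independent random variables and Yⱼ = Yⱼ(Xⱼ) nonnegative measurable functions with E Yⱼ < ∞ for all j. Let ψ be a randomized stopping rule with P(τ_ψ < ∞) = 1, where τ_ψ is the stopping time generated by ψ. Then Σ_{n=1}^∞ E[sₙ^ψ (Σ_{j=1}^n Yⱼ)] = Σ_{j=1}^∞ E[Yⱼ] · P(τ_ψ ≥ j), with both sides finite or infinite together. -/
open MeasureTheory Filter Finset Topology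
open scoped ENNReal

/-!
Along a sample path, `survivalProb` and `stopProb` are the paper's `tₙ^ψ` and `sₙ^ψ`. Since
`sₙ + tₙ₊₁ = tₙ`, telescoping gives `Σ_{n ≥ j} sₙ = tⱼ - lim tₙ`, and `Σₙ E sₙ = 1` forces
`lim tₙ = 0` almost surely. Exchanging the order of summation (all terms are nonnegative) turns the
left-hand side into `Σⱼ E[Yⱼ tⱼ]`; finally `tⱼ` is a function of `X₀, …, X_{j-1}` only, hence
independent of `Yⱼ`, so `E[Yⱼ tⱼ] = E[Yⱼ] E[tⱼ]`.
-/

noncomputable def survivalProb (p : ℕ → ℝ≥0∞) (n : ℕ) : ℝ≥0∞ := ∏ i ∈ range n, (1 - p i)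

noncomputable def stopProb (p : ℕ → ℝ≥0∞) (n : ℕ) : ℝ≥0∞ := survivalProb p n * p n

section Sequences

variable (p : ℕ → ℝ≥0∞)

lemma survivalProb_succ (n : ℕ) :
    survivalProb p (n + 1) = survivalProb p n * (1 - p n) :=
  prod_range_succ _ _

@[simp] lemma survivalProb_zero : survivalProb p 0 = 1 := prod_range_zero _

lemma survivalProb_antitone : Antitone (survivalProb p) :=
  antitone_nat_of_succ_le fun n => by
    rw [survivalProb_succ]; exact mul_le_of_le_one_right' tsub_le_self

variable {p}

lemma stopProb_add_survivalProb_succ {n : ℕ} (h : p n ≤ 1) :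
    stopProb p n + survivalProb p (n + 1) = survivalProb p n := by
  rw [stopProb, survivalProb_succ, ← mul_add, add_tsub_cancel_of_le h, mul_one]

lemma sum_stopProb_add_survivalProb (hp : ∀ n, p n ≤ 1) (j N : ℕ) :
    ∑ k ∈ range N, stopProb p (k + j) + survivalProb p (N + j) = survivalProb p j := by
  induction N with
  | zero => simp
  | succ N ih =>
    rw [sum_range_succ, add_assoc, add_right_comm N 1 j, stopProb_add_survivalProb_succ (hp _), ih]

lemma tsum_stopProb_add_iInf_survivalProb (hp : ∀ n, p n ≤ 1) (j : ℕ) :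
    ∑' k, stopProb p (k + j) + ⨅ n, survivalProb p n = survivalProb p j := by
  have hlim : Tendsto (fun N => ∑ k ∈ range N, stopProb p (k + j) + survivalProb p (N + j))
      atTop (𝓝 (∑' k, stopProb p (k + j) + ⨅ n, survivalProb p n)) :=
    (ENNReal.tendsto_nat_tsum _).add <|
      (tendsto_atTop_iInf (survivalProb_antitone p)).comp (tendsto_add_atTop_nat j)
  simp only [sum_stopProb_add_survivalProb hp] at hlim
  exact tendsto_nhds_unique hlim tendsto_const_nhds

end Sequences

lemma tsum_mul_sum_range_succ_eq_tsum_mul_tsum_nat_add (s Y : ℕ → ℝ≥0∞) :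
    ∑' n, s n * ∑ j ∈ range (n + 1), Y j = ∑' j, Y j * ∑' k, s (k + j) := by
  have hrange (n : ℕ) :
      s n * ∑ j ∈ range (n + 1), Y j = ∑' j, if j ≤ n then Y j * s n else 0 := by
    rw [tsum_eq_sum (s := range (n + 1)) fun j hj => if_neg (by simpa [Nat.lt_succ_iff] using hj),
      mul_sum]
    exact sum_congr rfl fun j hj => by rw [if_pos (by simpa [Nat.lt_succ_iff] using hj), mul_comm]
  have hshift (j : ℕ) : ∑' n, (if j ≤ n then Y j * s n else 0) = ∑' k, Y j * s (k + j) := by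
    rw [← ENNReal.summable.sum_add_tsum_nat_add' (k := j),
      sum_eq_zero fun n hn => if_neg (by simpa using hn), zero_add]
    simp only [Nat.le_add_left, if_true]
  simp only [hrange, ← ENNReal.tsum_mul_left, ← hshift]
  exact ENNReal.tsum_comm

lemma measurable_iSup_comap {Ω ι : Type*} {β : ι → Type*} [mβ : ∀ i, MeasurableSpace (β i)]
    (X : ∀ i, Ω → β i) {S : Set ι} {i : ι} (hi : i ∈ S) :
    Measurable[⨆ k ∈ S, (mβ k).comap (X k)] (X i) :=
  (comap_measurable (X i)).mono (le_iSup₂ (f := fun k (_ : k ∈ S) => (mβ k).comap (X k)) i hi)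
    le_rfl

open ProbabilityTheory in
lemma lintegral_mul_eq_lintegral_mul_lintegral_of_iIndepFun {Ω ι : Type*} [MeasurableSpace Ω]
    {P : Measure Ω} {β : ι → Type*} [mβ : ∀ i, MeasurableSpace (β i)] {X : ∀ i, Ω → β i}
    (hX : ∀ i, Measurable (X i)) (hindep : iIndepFun X P) {S T : Set ι} (hST : Disjoint S T)
    {f g : Ω → ℝ≥0∞} (hf : Measurable[⨆ i ∈ S, (mβ i).comap (X i)] f)
    (hg : Measurable[⨆ i ∈ T, (mβ i).comap (X i)] g) :
    ∫⁻ ω, f ω * g ω ∂P = (∫⁻ ω, f ω ∂P) * ∫⁻ ω, g ω ∂P :=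
  lintegral_mul_eq_lintegral_mul_lintegral_of_independent_measurableSpace
    (iSup₂_le fun i _ => (hX i).comap_le) (iSup₂_le fun i _ => (hX i).comap_le)
    (indep_iSup_of_disjoint (fun i => (hX i).comap_le) hindep.iIndep hST) hf hg

section Measurability

variable {Ω : Type*} {m : MeasurableSpace Ω} {ψ : ℕ → Ω → ℝ≥0∞}

lemma measurable_survivalProb {n : ℕ} (hψ : ∀ i < n, Measurable[m] (ψ i)) :
    Measurable[m] fun ω => survivalProb (ψ · ω) n :=
  Finset.measurable_prod _ fun i hi => measurable_const.sub (hψ i (mem_range.1 hi))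

lemma measurable_stopProb (hψ : ∀ i, Measurable[m] (ψ i)) (n : ℕ) :
    Measurable[m] fun ω => stopProb (ψ · ω) n :=
  (measurable_survivalProb fun i _ => hψ i).mul (hψ n)

lemma measurable_of_adapted {X : ℕ → Ω → ℝ} {Ψ : (n : ℕ) → (Fin (n + 1) → ℝ) → ℝ≥0∞}
    (hΨ : ∀ n, Measurable (Ψ n)) (hadapt : ∀ n ω, ψ n ω = Ψ n (fun i => X i ω)) {i : ℕ}
    (hX : ∀ k ≤ i, Measurable[m] (X k)) : Measurable[m] (ψ i) := by
  rw [funext (hadapt i)]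
  exact (hΨ i).comp (measurable_pi_lambda _ fun k => hX k (Nat.lt_succ_iff.1 k.isLt))

end Measurability

lemma ae_tsum_stopProb_eq_survivalProb {Ω : Type*} [MeasurableSpace Ω] {P : Measure Ω}
    [IsProbabilityMeasure P] {ψ : ℕ → Ω → ℝ≥0∞}
    (hψ : ∀ n, Measurable (ψ n)) (hψ1 : ∀ n ω, ψ n ω ≤ 1)
    (hstop : ∑' n, ∫⁻ ω, stopProb (ψ · ω) n ∂P = 1) :
    ∀ᵐ ω ∂P, ∀ j, ∑' k, stopProb (ψ · ω) (k + j) = survivalProb (ψ · ω) j := by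
  have htelescope (ω : Ω) (j : ℕ) := tsum_stopProb_add_iInf_survivalProb (hψ1 · ω) j
  have hinf_meas : Measurable fun ω => ⨅ n, survivalProb (ψ · ω) n :=
    .iInf fun n => measurable_survivalProb fun i _ => hψ i
  have hinf_zero : ∫⁻ ω, ⨅ n, survivalProb (ψ · ω) n ∂P = 0 := by
    have := lintegral_add_right (μ := P) (fun ω => ∑' n, stopProb (ψ · ω) n) hinf_meas
    have htotal (ω : Ω) : ∑' n, stopProb (ψ · ω) n + ⨅ n, survivalProb (ψ · ω) n = 1 := by
      simpa using htelescope ω 0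
    rw [lintegral_tsum fun n => (measurable_stopProb hψ n).aemeasurable, hstop] at this
    simp only [htotal, lintegral_one, measure_univ] at this
    exact (ENNReal.add_right_inj ENNReal.one_ne_top).1 (this.symm.trans (add_zero 1).symm)
  filter_upwards [(lintegral_eq_zero_iff hinf_meas).1 hinf_zero] with ω hω j
  simpa [hω] using htelescope ω j

theorem wald_identity_nonidentical_general
    {Ω : Type*} [MeasurableSpace Ω] (P : Measure Ω) [IsProbabilityMeasure P]
    (X : ℕ → Ω → ℝ) (hX : ∀ j, Measurable (X j))
    (hindep : ProbabilityTheory.iIndepFun X P)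
    (ψ : ℕ → Ω → ℝ≥0∞) (hψ1 : ∀ n ω, ψ n ω ≤ 1)
    (Ψ : (n : ℕ) → (Fin (n+1) → ℝ) → ℝ≥0∞) (hΨ : ∀ n, Measurable (Ψ n))
    (hadapt : ∀ n ω, ψ n ω = Ψ n (fun i => X i ω))
    (Yf : ℕ → ℝ → ℝ≥0∞) (hYf : ∀ j, Measurable (Yf j))
    (s t : ℕ → Ω → ℝ≥0∞)
    (hs : ∀ n ω, s n ω = (∏ i ∈ Finset.range n, (1 - ψ i ω)) * ψ n ω)
    (ht : ∀ n ω, t n ω = ∏ i ∈ Finset.range n, (1 - ψ i ω))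
    (hstop : ∑' n, ∫⁻ ω, s n ω ∂P = 1) :
    ∑' n, ∫⁻ ω, s n ω * ∑ j ∈ Finset.range (n+1), Yf j (X j ω) ∂P
      = ∑' j, (∫⁻ ω, Yf j (X j ω) ∂P) * ∫⁻ ω, t j ω ∂P := by
  have hs' : ∀ n ω, s n ω = stopProb (ψ · ω) n := hs
  have ht' : ∀ n ω, t n ω = survivalProb (ψ · ω) n := ht
  simp only [hs', ht'] at hstop ⊢
  have hψ (n : ℕ) : Measurable (ψ n) := measurable_of_adapted hΨ hadapt fun k _ => hX k
  have hY (j : ℕ) : Measurable fun ω => Yf j (X j ω) := (hYf j).comp (hX j)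
  calc ∑' n, ∫⁻ ω, stopProb (ψ · ω) n * ∑ j ∈ range (n + 1), Yf j (X j ω) ∂P
      = ∫⁻ ω, ∑' n, stopProb (ψ · ω) n * ∑ j ∈ range (n + 1), Yf j (X j ω) ∂P :=
        (lintegral_tsum fun n => ((measurable_stopProb hψ n).mul
          (Finset.measurable_sum _ fun j _ => hY j)).aemeasurable).symm
    _ = ∫⁻ ω, ∑' j, Yf j (X j ω) * survivalProb (ψ · ω) j ∂P := by
        refine lintegral_congr_ae ?_
        filter_upwards [ae_tsum_stopProb_eq_survivalProb hψ hψ1 hstop] with ω hω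
        simp only [tsum_mul_sum_range_succ_eq_tsum_mul_tsum_nat_add, hω]
    _ = ∑' j, ∫⁻ ω, Yf j (X j ω) * survivalProb (ψ · ω) j ∂P :=
        lintegral_tsum fun j => ((hY j).mul (measurable_survivalProb fun i _ => hψ i)).aemeasurable
    _ = ∑' j, (∫⁻ ω, Yf j (X j ω) ∂P) * ∫⁻ ω, survivalProb (ψ · ω) j ∂P := by
        congr 1 with j
        exact lintegral_mul_eq_lintegral_mul_lintegral_of_iIndepFun hX hindep
          (Set.disjoint_singleton_left.2 Set.self_notMem_Iio)
          ((hYf j).comp (measurable_iSup_comap X rfl))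
          (measurable_survivalProb fun i hi => measurable_of_adapted hΨ hadapt fun k hk =>
            measurable_iSup_comap X (Set.mem_Iio.2 (hk.trans_lt hi)))

/-- Wald's identity for independent, not necessarily identically distributed,
observations (Lemma 2 of the paper): for nonnegative `Yⱼ = Yf j (Xⱼ)` with finite
expectations and a randomized stopping rule `ψ` adapted to the observations with
`P(τ_ψ < ∞) = 1`, one has
`Σₙ E[sₙ (Σ_{j≤n} Yⱼ)] = Σⱼ E[Yⱼ] P(τ_ψ ≥ j)`, where `P(τ_ψ ≥ j) = E[tⱼ]`.
Stated in `ℝ≥0∞`, so both sides are finite or infinite together. -/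
theorem wald_identity_nonidentical
    {Ω : Type*} [MeasurableSpace Ω] (P : Measure Ω) [IsProbabilityMeasure P]
    (X : ℕ → Ω → ℝ) (hX : ∀ j, Measurable (X j))
    (hindep : ProbabilityTheory.iIndepFun X P)
    (ψ : ℕ → Ω → ℝ≥0∞) (hψ1 : ∀ n ω, ψ n ω ≤ 1)
    (Ψ : (n : ℕ) → (Fin (n+1) → ℝ) → ℝ≥0∞) (hΨ : ∀ n, Measurable (Ψ n))
    (hadapt : ∀ n ω, ψ n ω = Ψ n (fun i => X i ω))
    (Yf : ℕ → ℝ → ℝ≥0∞) (hYf : ∀ j, Measurable (Yf j))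
    (hYfin : ∀ j, ∫⁻ ω, Yf j (X j ω) ∂P < ⊤)
    (s t : ℕ → Ω → ℝ≥0∞)
    (hs : ∀ n ω, s n ω = (∏ i ∈ Finset.range n, (1 - ψ i ω)) * ψ n ω)
    (ht : ∀ n ω, t n ω = ∏ i ∈ Finset.range n, (1 - ψ i ω))
    (hstop : ∑' n, ∫⁻ ω, s n ω ∂P = 1) :
    ∑' n, ∫⁻ ω, s n ω * ∑ j ∈ Finset.range (n+1), Yf j (X j ω) ∂P
      = ∑' j, (∫⁻ ω, Yf j (X j ω) ∂P) * ∫⁻ ω, t j ω ∂P :=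
  wald_identity_nonidentical_general P X hX hindep ψ hψ1 Ψ hΨ hadapt Yf hYf s t hs ht hstop
end

section
/- Properties of the truncated continuation-value functions: With v_n^N as defined by the backward recursion and r_{n−1}^N(z;c) = E_{θ₀} v_n^N(z − qₙ; c), for every n: (1) r_n^N(z) ≤ v_n^N(z) for all z; (2) r_n^N is concave and continuous; (3) r_n^N is non-decreasing; (4) z − r_n^N(z) is non-decreasing; (5) g(z) − r_n^N(z) → 0 as z → ±∞, where g(z) = min{0,z}. -/
/-!
Both steps of the recursion preserve the class `IsTightMinorant` of concave minorants `f` of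
`g = min 0 ·` with `f` and `z - f z` monotone (hence `f` 1-Lipschitz) and gap `g - f` vanishing
at `±∞`. Averaging `z ↦ E f(z - q)` over a centred integrable score keeps the pointwise
properties by integrating them, and the limits by dominated convergence: the gap is bounded by
`-f 0`, and at `-∞` the pointwise limit of the integrand is `q`, which has mean zero. Taking
`min g (c + f)` with `c > 0` keeps the class because near `±∞` the gap of `f` is below `c`, so
the minimum is `g` there. Backward induction from `v_N^N = g` puts every `v_n^N`, and hence
every `r_n^N`, in the class.
-/

open MeasureTheory Filter Topology

structure IsTightMinorant (f : ℝ → ℝ) : Prop where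
  le_min_zero : ∀ z, f z ≤ min 0 z
  monotone : Monotone f
  monotone_id_sub : Monotone fun z => z - f z
  concaveOn : ConcaveOn ℝ Set.univ f
  tendsto_atTop : Tendsto (fun z => min 0 z - f z) atTop (𝓝 0)
  tendsto_atBot : Tendsto (fun z => min 0 z - f z) atBot (𝓝 0)

lemma lipschitzWith_one_of_monotone_of_monotone_id_sub {f : ℝ → ℝ} (hf : Monotone f)
    (hf' : Monotone fun z => z - f z) : LipschitzWith 1 f := by
  refine LipschitzWith.of_le_add fun x y => ?_
  rw [Real.dist_eq]
  rcases le_total x y with hxy | hyx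
  · linarith [hf hxy, abs_nonneg (x - y)]
  · linarith [hf' hyx, le_abs_self (x - y)]

lemma LipschitzWith.integrable_comp {Ω : Type*} [MeasurableSpace Ω] {P : Measure Ω}
    [IsFiniteMeasure P] {f : ℝ → ℝ} {K : NNReal} (hf : LipschitzWith K f) {X : Ω → ℝ}
    (hX : Integrable X P) : Integrable (fun ω => f (X ω)) P := by
  refine ((integrable_const |f 0|).add (hX.abs.const_mul K)).mono'
    (hf.continuous.comp_aestronglyMeasurable hX.aestronglyMeasurable) (ae_of_all _ fun ω => ?_)
  have h := hf.dist_le_mul (X ω) 0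
  rw [Real.dist_eq, Real.dist_eq, sub_zero] at h
  change |f (X ω)| ≤ |f 0| + K * |X ω|
  linarith [abs_sub_abs_le_abs_sub (f (X ω)) (f 0)]

lemma concaveOn_integral {Ω : Type*} [MeasurableSpace Ω] {P : Measure Ω} {F : ℝ → Ω → ℝ}
    (hF : ∀ ω, ConcaveOn ℝ Set.univ fun x => F x ω) (hint : ∀ x, Integrable (F x) P) :
    ConcaveOn ℝ Set.univ fun x => ∫ ω, F x ω ∂P := by
  refine ⟨convex_univ, fun x _ y _ a b ha hb hab => ?_⟩
  simp only [smul_eq_mul]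
  rw [← integral_const_mul, ← integral_const_mul,
    ← integral_add ((hint x).const_mul a) ((hint y).const_mul b)]
  exact integral_mono (((hint x).const_mul a).add ((hint y).const_mul b)) (hint _)
    fun ω => by simpa only [smul_eq_mul] using (hF ω).2 trivial trivial ha hb hab

lemma min_zero_sub_min_zero_sub_eventuallyEq_atTop (a : ℝ) :
    (fun z : ℝ => min 0 z - min 0 (z - a)) =ᶠ[atTop] fun _ => 0 := by
  filter_upwards [eventually_ge_atTop (max 0 a)] with z hz
  rw [min_eq_left (le_of_max_le_left hz), min_eq_left (by linarith [le_max_right 0 a]), sub_zero]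

lemma min_zero_sub_min_zero_sub_eventuallyEq_atBot (a : ℝ) :
    (fun z : ℝ => min 0 z - min 0 (z - a)) =ᶠ[atBot] fun _ => a := by
  filter_upwards [eventually_le_atBot (min 0 a)] with z hz
  rw [min_eq_right (hz.trans (min_le_left 0 a)),
    min_eq_right (by linarith [min_le_right 0 a])]
  ring

lemma isTightMinorant_min_zero : IsTightMinorant fun z => min 0 z where
  le_min_zero _ := le_rfl
  monotone _ _ h := min_le_min_left 0 h
  monotone_id_sub := by
    simp only [← max_sub_sub_left, sub_zero, sub_self]
    exact monotone_id.max monotone_const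
  concaveOn := (concaveOn_const 0 convex_univ).inf (concaveOn_id convex_univ)
  tendsto_atTop := by simp
  tendsto_atBot := by simp

namespace IsTightMinorant

variable {f : ℝ → ℝ} (hf : IsTightMinorant f)
include hf

lemma lipschitzWith : LipschitzWith 1 f :=
  lipschitzWith_one_of_monotone_of_monotone_id_sub hf.monotone hf.monotone_id_sub

lemma continuous : Continuous f := hf.lipschitzWith.continuous

-- The gap increases on `(-∞, 0]` and decreases on `[0, ∞)`.
lemma min_zero_sub_le (z : ℝ) : min 0 z - f z ≤ -f 0 := by
  rcases le_total z 0 with hz | hz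
  · rw [min_eq_right hz]
    linarith [hf.monotone_id_sub hz]
  · rw [min_eq_left hz]
    linarith [hf.monotone hz]

lemma tendsto_min_zero_sub_comp_sub_atTop (a : ℝ) :
    Tendsto (fun z => min 0 z - f (z - a)) atTop (𝓝 0) := by
  have hgap := hf.tendsto_atTop.comp (tendsto_atTop_add_const_right atTop (-a) tendsto_id)
  simp only [Function.comp_def, id, ← sub_eq_add_neg] at hgap
  simpa using ((tendsto_const_nhds (x := (0 : ℝ))).congr'
    (min_zero_sub_min_zero_sub_eventuallyEq_atTop a).symm).add hgap

lemma tendsto_min_zero_sub_comp_sub_atBot (a : ℝ) :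
    Tendsto (fun z => min 0 z - f (z - a)) atBot (𝓝 a) := by
  have hgap := hf.tendsto_atBot.comp (tendsto_atBot_add_const_right atBot (-a) tendsto_id)
  simp only [Function.comp_def, id, ← sub_eq_add_neg] at hgap
  simpa using ((tendsto_const_nhds (x := a)).congr'
    (min_zero_sub_min_zero_sub_eventuallyEq_atBot a).symm).add hgap

lemma min_add_const {c : ℝ} (hc : 0 < c) :
    IsTightMinorant fun z => min (min 0 z) (c + f z) := by
  have tendsto_of {l : Filter ℝ} (hl : Tendsto (fun z => min 0 z - f z) l (𝓝 0)) :
      Tendsto (fun z => min 0 z - min (min 0 z) (c + f z)) l (𝓝 0) := by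
    refine tendsto_const_nhds.congr' ?_
    filter_upwards [hl.eventually_lt_const hc] with z hz
    rw [min_eq_left (by linarith : min 0 z ≤ c + f z), sub_self]
  refine ⟨fun _ => min_le_left _ _, fun a b hab => ?_, ?_, ?_, tendsto_of hf.tendsto_atTop,
    tendsto_of hf.tendsto_atBot⟩
  · exact min_le_min (min_le_min_left 0 hab) (add_le_add_right (hf.monotone hab) c)
  · have h : Monotone fun z => max (z - min 0 z) (z - (c + f z)) :=
      isTightMinorant_min_zero.monotone_id_sub.max fun x y hxy => by
        linarith [hf.monotone_id_sub hxy]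
    simpa only [max_sub_sub_left] using h
  · exact isTightMinorant_min_zero.concaveOn.inf
      ((concaveOn_const c convex_univ).add hf.concaveOn)

variable {Ω : Type*} [MeasurableSpace Ω] {P : Measure Ω} [IsProbabilityMeasure P]
  {q : Ω → ℝ} (hq : Integrable q P)
include hq

lemma integrable_comp_sub (z : ℝ) : Integrable (fun ω => f (z - q ω)) P :=
  hf.lipschitzWith.integrable_comp ((integrable_const z).sub hq)

-- Dominated convergence, with `|q| - f 0` as dominating function.
lemma tendsto_min_zero_sub_integral_comp_sub {l : Filter ℝ} [l.IsCountablyGenerated]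
    {limit : Ω → ℝ}
    (hlim : ∀ ω, Tendsto (fun z => min 0 z - f (z - q ω)) l (𝓝 (limit ω))) :
    Tendsto (fun z => min 0 z - ∫ ω, f (z - q ω) ∂P) l (𝓝 (∫ ω, limit ω ∂P)) := by
  have hint z := hf.integrable_comp_sub hq z
  have hbound (z : ℝ) (ω : Ω) : ‖min 0 z - f (z - q ω)‖ ≤ |q ω| - f 0 := by
    have hmin := isTightMinorant_min_zero.lipschitzWith.dist_le_mul z (z - q ω)
    rw [Real.dist_eq, Real.dist_eq, sub_sub_cancel, NNReal.coe_one, one_mul] at hmin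
    rw [Real.norm_eq_abs, abs_le]
    constructor <;>
      linarith [abs_le.1 hmin, hf.le_min_zero (z - q ω), hf.min_zero_sub_le (z - q ω)]
  have h := tendsto_integral_filter_of_dominated_convergence
    (F := fun z ω => min 0 z - f (z - q ω)) (fun ω => |q ω| - f 0)
    (.of_forall fun z => ((integrable_const _).sub (hint z)).aestronglyMeasurable)
    (.of_forall fun z => ae_of_all _ (hbound z)) (hq.abs.sub (integrable_const _))
    (ae_of_all _ hlim)
  refine h.congr fun z => ?_
  rw [integral_sub (integrable_const _) (hint z), integral_const, probReal_univ, one_smul]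

lemma integral_comp_sub (hq0 : ∫ ω, q ω ∂P = 0) :
    IsTightMinorant fun z => ∫ ω, f (z - q ω) ∂P := by
  have hint z := hf.integrable_comp_sub hq z
  have hzq (z : ℝ) : Integrable (fun ω => z - q ω) P := (integrable_const z).sub hq
  have integral_sub_q (z : ℝ) : ∫ ω, (z - q ω) ∂P = z := by
    rw [integral_sub (integrable_const z) hq, hq0, integral_const, probReal_univ, one_smul,
      sub_zero]
  refine ⟨fun z => le_min ?_ ?_, fun a b hab => ?_, fun a b hab => ?_, ?_, ?_, ?_⟩
  · simpa using integral_mono (hint z) (integrable_const 0)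
      fun ω => (hf.le_min_zero _).trans (min_le_left _ _)
  · simpa only [integral_sub_q] using integral_mono (hint z) (hzq z)
      fun ω => (hf.le_min_zero _).trans (min_le_right _ _)
  · exact integral_mono (hint a) (hint b) fun ω => hf.monotone (sub_le_sub_right hab _)
  · have id_sub_integral (z : ℝ) :
        z - ∫ ω, f (z - q ω) ∂P = ∫ ω, (z - q ω - f (z - q ω)) ∂P := by
      rw [integral_sub (hzq z) (hint z), integral_sub_q]
    dsimp only
    rw [id_sub_integral a, id_sub_integral b]
    exact integral_mono ((hzq a).sub (hint a)) ((hzq b).sub (hint b))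
      fun ω => hf.monotone_id_sub (sub_le_sub_right hab (q ω))
  · refine concaveOn_integral (fun ω => ?_) hint
    have h := hf.concaveOn.translate_left (-q ω)
    simp only [Set.preimage_univ, Function.comp_def, ← sub_eq_add_neg] at h
    exact h
  · simpa using hf.tendsto_min_zero_sub_integral_comp_sub hq
      fun ω => hf.tendsto_min_zero_sub_comp_sub_atTop (q ω)
  · simpa [hq0] using hf.tendsto_min_zero_sub_integral_comp_sub hq
      fun ω => hf.tendsto_min_zero_sub_comp_sub_atBot (q ω)

end IsTightMinorant

/-- Properties of the truncated continuation-value functions (Lemma 7 of the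
paper): with `g(z) = min{0,z}`, `v_N^N = g`,
`v_n^N(z) = min{g(z), c + E_{θ₀} v_{n+1}^N(z − q_{n+1})}` and
`r_n^N(z) = E_{θ₀} v_{n+1}^N(z − q_{n+1})` for `n < N`, every `r_n^N` satisfies:
`r_n^N ≤ v_n^N`, it is concave and continuous, non-decreasing, `z − r_n^N(z)` is
non-decreasing, and `g(z) − r_n^N(z) → 0` as `z → ±∞`. -/
theorem truncated_continuation_properties
    {Ω : Type*} [MeasurableSpace Ω] (P : Measure Ω) [IsProbabilityMeasure P]
    (N : ℕ) (c : ℝ) (hc : 0 < c)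
    (q : ℕ → Ω → ℝ) (hq : ∀ n, Integrable (q n) P) (hq0 : ∀ n, ∫ ω, q n ω ∂P = 0)
    (v r : ℕ → ℝ → ℝ)
    (hvN : ∀ z, v N z = min 0 z)
    (hrec : ∀ n, n < N → ∀ z,
      v n z = min (min 0 z) (c + ∫ ω, v (n+1) (z - q (n+1) ω) ∂P))
    (hr : ∀ n, n < N → ∀ z, r n z = ∫ ω, v (n+1) (z - q (n+1) ω) ∂P) :
    ∀ n, n < N →
      (∀ z, r n z ≤ v n z) ∧
      ConcaveOn ℝ Set.univ (r n) ∧ Continuous (r n) ∧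
      Monotone (r n) ∧ Monotone (fun z => z - r n z) ∧
      Tendsto (fun z => min 0 z - r n z) atTop (𝓝 0) ∧
      Tendsto (fun z => min 0 z - r n z) atBot (𝓝 0) := by
  have hv n (hn : n ≤ N) : IsTightMinorant (v n) := by
    induction hn using Nat.decreasingInduction with
    | self => exact (funext hvN).symm ▸ isTightMinorant_min_zero
    | of_succ k hk ih =>
      rw [show v k = _ from funext (hrec k hk)]
      exact (ih.integral_comp_sub (hq _) (hq0 _)).min_add_const hc
  intro n hn
  have hrn : IsTightMinorant (r n) :=
    funext (hr n hn) ▸ (hv (n+1) hn).integral_comp_sub (hq _) (hq0 _)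
  refine ⟨fun z => ?_, hrn.concaveOn, hrn.continuous, hrn.monotone, hrn.monotone_id_sub,
    hrn.tendsto_atTop, hrn.tendsto_atBot⟩
  rw [hrec n hn z, ← hr n hn z]
  exact le_min (hrn.le_min_zero z) (by linarith)
end

section
/- Asymptotic limits of the non-truncated value functions: Let v_n(z;c) and r_n(z;c) be the limit value and continuation-value functions satisfying v_{n−1}(z;c) = min{g(z), c + E_{θ₀}v_n(z−qₙ;c)}, and suppose all r_n(0;c) are bounded below by a common constant −K (which holds under Assumptions 1–3 with K = γ₁/(8c) + c). Then for every n: g(z) − r_n(z;c) → 0 as z → +∞ and as z → −∞. Equivalently, r_n(z;c) → 0 as z → +∞ and z − r_n(z;c) → 0 as z → −∞. -/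
open MeasureTheory Filter Topology

/-!
Both limits are limits at `+∞` of a nonnegative antitone function: `-v n` for `z → +∞`, and
`y ↦ -y - v n (-y)` (the reflection of `z - v n z`, with `q` replaced by `-q`) for `z → -∞`.
Such a function `f n` has a limit `L n`, and by dominated convergence the recursion passes to the
limit as `L n = max 0 (L (n + 1) - c)`. If some `L n > 0`, then `L (n + k) = L n + k c` is
unbounded, contradicting the uniform bound on `r n 0`; hence every `L n` vanishes.
-/

theorem eq_zero_of_eq_max_sub_of_le {a : ℕ → ℝ} {c K : ℝ} (hc : 0 < c)
    (hrec : ∀ m, a m = max 0 (a (m + 1) - c)) (hK : ∀ m, a (m + 1) ≤ K) (m : ℕ) :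
    a m = 0 := by
  have hstep : ∀ j, 0 < a j → a (j + 1) = a j + c := fun j hj => by
    rw [hrec j, lt_max_iff, lt_self_iff_false, false_or] at hj
    linarith [hrec j, max_eq_right hj.le]
  have hgrow : 0 < a m → ∀ k : ℕ, a m + k * c ≤ a (m + k) := fun hpos k => by
    induction k with
    | zero => simp
    | succ k ih =>
      rw [← add_assoc, hstep _ (by nlinarith [k.cast_nonneg (α := ℝ)])]
      push_cast
      linarith
  refine le_antisymm (not_lt.1 fun hpos => ?_) (hrec m ▸ le_max_left _ _)
  obtain ⟨k, hk⟩ := exists_nat_gt ((K - a m) / c)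
  have := hgrow hpos (k + 1)
  rw [← add_assoc] at this
  push_cast at this
  linarith [(div_lt_iff₀ hc).1 hk, hK (m + k)]

section

variable {Ω : Type*} [MeasurableSpace Ω] {P : Measure Ω} [IsProbabilityMeasure P]

theorem tendsto_integral_comp_sub_atTop {F : ℝ → ℝ} {a : ℝ} {X : Ω → ℝ} (hF : Antitone F)
    (hF0 : 0 ≤ F) (hFa : Tendsto F atTop (𝓝 a))
    (hint : ∀ z, Integrable (fun ω => F (z - X ω)) P) :
    Tendsto (fun z => ∫ ω, F (z - X ω) ∂P) atTop (𝓝 a) := by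
  have key := tendsto_integral_filter_of_dominated_convergence (μ := P) (l := atTop)
    (F := fun z ω => F (z - X ω)) (f := fun _ => a) (fun ω => F (0 - X ω))
    (Eventually.of_forall fun z => (hint z).1)
    (by
      filter_upwards [eventually_ge_atTop 0] with z hz
      refine Eventually.of_forall fun ω => ?_
      rw [Real.norm_of_nonneg (hF0 _)]
      exact hF (by linarith))
    (hint 0)
    (Eventually.of_forall fun ω => hFa.comp (tendsto_atTop_add_const_right _ _ tendsto_id))
  simpa using key

theorem integral_sub_sub_of_integral_eq_zero {X G : Ω → ℝ} (hX : Integrable X P)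
    (hX0 : ∫ ω, X ω ∂P = 0) (hG : Integrable G P) (z : ℝ) :
    ∫ ω, (z - X ω - G ω) ∂P = z - ∫ ω, G ω ∂P := by
  have hzX : Integrable (fun ω => z - X ω) P := (integrable_const z).sub hX
  rw [integral_sub hzX hG, integral_sub (integrable_const z) hX, hX0]
  simp

theorem tendsto_integral_comp_sub_atTop_zero_of_eq_max {c K : ℝ} (hc : 0 < c)
    {f : ℕ → ℝ → ℝ} {X : ℕ → Ω → ℝ} (hf0 : ∀ m, 0 ≤ f m) (hf : ∀ m, Antitone (f m))
    (hint : ∀ m z, Integrable (fun ω => f (m + 1) (z - X (m + 1) ω)) P)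
    (hrec : ∀ m, f m =ᶠ[atTop] fun z => max 0 (∫ ω, f (m + 1) (z - X (m + 1) ω) ∂P - c))
    (hK : ∀ m, ∫ ω, f (m + 1) (0 - X (m + 1) ω) ∂P ≤ K) (m : ℕ) :
    Tendsto (fun z => ∫ ω, f (m + 1) (z - X (m + 1) ω) ∂P) atTop (𝓝 0) := by
  set L : ℕ → ℝ := fun m => ⨅ z, f m z
  have hbdd : ∀ m, BddBelow (Set.range (f m)) := fun m => ⟨0, by
    rintro _ ⟨z, rfl⟩; exact hf0 m z⟩
  have hfL : ∀ m, Tendsto (f m) atTop (𝓝 (L m)) := fun m => tendsto_atTop_ciInf (hf m) (hbdd m)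
  have hEL : ∀ m, Tendsto (fun z => ∫ ω, f (m + 1) (z - X (m + 1) ω) ∂P) atTop (𝓝 (L (m + 1))) :=
    fun m => tendsto_integral_comp_sub_atTop (hf _) (hf0 _) (hfL _) (hint m)
  have hLrec : ∀ m, L m = max 0 (L (m + 1) - c) := fun m =>
    tendsto_nhds_unique (hfL m)
      ((tendsto_const_nhds.max ((hEL m).sub_const c)).congr' (hrec m).symm)
  have hLK : ∀ m, L (m + 1) ≤ K := fun m => by
    refine le_trans ?_ (hK m)
    calc L (m + 1) = ∫ _, L (m + 1) ∂P := by simp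
      _ ≤ _ := integral_mono (integrable_const _) (hint m 0) fun ω => ciInf_le (hbdd _) _
  simpa [eq_zero_of_eq_max_sub_of_le hc hLrec hLK (m + 1)] using hEL m

theorem tendsto_min_sub_continuation_atTop {c K : ℝ} (hc : 0 < c) {q : ℕ → Ω → ℝ}
    {v r : ℕ → ℝ → ℝ} (hrec : ∀ n z, v n z = min (min 0 z) (c + r n z))
    (hrdef : ∀ n z, r n z = ∫ ω, v (n + 1) (z - q (n + 1) ω) ∂P)
    (hint : ∀ n z, Integrable (fun ω => v (n + 1) (z - q (n + 1) ω)) P)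
    (hvg : ∀ n z, v n z ≤ min 0 z) (hmono : ∀ n, Monotone (v n)) (hK : ∀ n, -K ≤ r n 0)
    (n : ℕ) : Tendsto (fun z => min 0 z - r n z) atTop (𝓝 0) := by
  have hneg : ∀ n z, ∫ ω, -v (n + 1) (z - q (n + 1) ω) ∂P = -r n z := fun n z => by
    rw [integral_neg, hrdef]
  have key := tendsto_integral_comp_sub_atTop_zero_of_eq_max (P := P) (K := K)
    (f := fun m z => -v m z) (X := q) hc
    (fun m z => neg_nonneg.2 ((hvg m z).trans (min_le_left _ _)))
    (fun m => (hmono m).neg) (fun m z => (hint m z).neg)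
    (fun m => (eventually_ge_atTop 0).mono fun z hz => by
      dsimp only
      rw [hneg, hrec, min_eq_left hz, ← max_neg_neg, neg_zero]
      congr 1; ring)
    (fun m => by rw [hneg]; linarith [hK m]) n
  refine (key.congr' ((eventually_ge_atTop 0).mono fun z hz => ?_))
  dsimp only
  rw [hneg, min_eq_left hz, zero_sub]

theorem tendsto_min_sub_continuation_atBot {c K : ℝ} (hc : 0 < c) {q : ℕ → Ω → ℝ}
    (hq : ∀ n, Integrable (q n) P) (hq0 : ∀ n, ∫ ω, q n ω ∂P = 0)
    {v r : ℕ → ℝ → ℝ} (hrec : ∀ n z, v n z = min (min 0 z) (c + r n z))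
    (hrdef : ∀ n z, r n z = ∫ ω, v (n + 1) (z - q (n + 1) ω) ∂P)
    (hint : ∀ n z, Integrable (fun ω => v (n + 1) (z - q (n + 1) ω)) P)
    (hvg : ∀ n z, v n z ≤ min 0 z) (hmono : ∀ n, Monotone (fun z => z - v n z))
    (hK : ∀ n, -K ≤ r n 0) (n : ℕ) : Tendsto (fun z => min 0 z - r n z) atBot (𝓝 0) := by
  have hreflect : ∀ n y, (fun ω => -(y - -q (n + 1) ω) - v (n + 1) (-(y - -q (n + 1) ω))) =
      fun ω => -y - q (n + 1) ω - v (n + 1) (-y - q (n + 1) ω) := fun n y => by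
    funext ω; rw [show -(y - -q (n + 1) ω) = -y - q (n + 1) ω by ring]
  have hmean : ∀ n z, ∫ ω, (z - q (n + 1) ω - v (n + 1) (z - q (n + 1) ω)) ∂P = z - r n z :=
    fun n z => by rw [integral_sub_sub_of_integral_eq_zero (hq _) (hq0 _) (hint n z), hrdef]
  have key := tendsto_integral_comp_sub_atTop_zero_of_eq_max (P := P) (K := K)
    (f := fun m y => -y - v m (-y)) (X := fun m ω => -q m ω) hc
    (fun m y => sub_nonneg.2 ((hvg m _).trans (min_le_right _ _)))
    (fun m => (hmono m).comp_antitone monotone_id.neg)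
    (fun m y => by simp only [hreflect]; exact ((integrable_const _).sub (hq _)).sub (hint m _))
    (fun m => (eventually_ge_atTop 0).mono fun y hy => by
      simp only [hreflect, hmean]
      rw [hrec, min_eq_right (neg_nonpos.2 hy), ← max_sub_sub_left, sub_self]
      congr 1; ring)
    (fun m => by simp only [hreflect, hmean, neg_zero]; linarith [hK m]) n
  refine ((key.comp tendsto_neg_atBot_atTop).congr' ((eventually_le_atBot 0).mono fun z hz => ?_))
  simp only [Function.comp, hreflect, hmean, neg_neg, min_eq_right hz]

end

/-- Asymptotic limits of the non-truncated value functions (property 5 of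
Lemma 11 of the paper): if the limit value functions satisfy the recursion
`v n z = min{g(z), c + E_{θ₀} v (n+1) (z − q_{n+1})}` with
`r n z = E_{θ₀} v (n+1) (z − q_{n+1})`, `v n ≤ g`, the monotonicity properties
hold, and all `r n 0` are bounded below by a common constant `−K`, then
`g(z) − r n (z) → 0` as `z → +∞` and as `z → −∞`. -/
theorem limit_value_boundary_behavior
    {Ω : Type*} [MeasurableSpace Ω] (P : Measure Ω) [IsProbabilityMeasure P]
    (c K : ℝ) (hc : 0 < c)
    (q : ℕ → Ω → ℝ) (hq : ∀ n, Integrable (q n) P) (hq0 : ∀ n, ∫ ω, q n ω ∂P = 0)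
    (v r : ℕ → ℝ → ℝ)
    (hrec : ∀ n z, v n z = min (min 0 z) (c + ∫ ω, v (n+1) (z - q (n+1) ω) ∂P))
    (hrdef : ∀ n z, r n z = ∫ ω, v (n+1) (z - q (n+1) ω) ∂P)
    (hint : ∀ n z, Integrable (fun ω => v (n+1) (z - q (n+1) ω)) P)
    (hvg : ∀ n z, v n z ≤ min 0 z)
    (hmono : ∀ n, Monotone (v n)) (hmono2 : ∀ n, Monotone (fun z => z - v n z))
    (hK : ∀ n, -K ≤ r n 0) :
    ∀ n, Tendsto (fun z => min 0 z - r n z) atTop (𝓝 0) ∧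
      Tendsto (fun z => min 0 z - r n z) atBot (𝓝 0) := by
  have hrec' : ∀ n z, v n z = min (min 0 z) (c + r n z) := fun n z => by rw [hrec, hrdef]
  exact fun n => ⟨tendsto_min_sub_continuation_atTop hc hrec' hrdef hint hvg hmono hK n,
    tendsto_min_sub_continuation_atBot hc hq hq0 hrec' hrdef hint hvg hmono2 hK n⟩
end

section
/- Characterization of the continuation region for the non-truncated problem: Let r_n(·;c) satisfy the properties: r_n(z) ≤ g(z) = min{0,z}, r_n concave, continuous, non-decreasing, z − r_n(z) non-decreasing, and g(z) − r_n(z) → 0 as z → ±∞. If c + r_n(0;c) ≤ 0, then there are unique Aₙ(c) ≤ 0 and Bₙ(c) ≥ 0 solving c + r_n(z;c) = g(z) in {z ≤ 0} and {z ≥ 0} respectively, and the conditions 'g(b−zₙ) > c + r_n(b−zₙ;c)' and 'g(b−zₙ) ≥ c + r_n(b−zₙ;c)' are equivalent to 'b−zₙ ∈ (Aₙ(c), Bₙ(c))' and 'b−zₙ ∈ [Aₙ(c), Bₙ(c)]' respectively. If c + r_n(0;c) > 0, the continuation region is empty. -/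
/-!
The gap `min 0 z - r z` is the minimum of `φ z = z - r z`, convex, nondecreasing and tending to
`0` at `-∞`, and of `ψ z = -r z`, convex, nonincreasing and tending to `0` at `+∞`. A convex
function that takes the same value at two points is, to the left of them, at least that value;
so a monotone convex function is strictly increasing wherever it exceeds its limit at `-∞`. Hence
`{φ > c} = (A, ∞)` and `{ψ > c} = (-∞, B)` for the unique solutions `A ≤ 0 ≤ B` of `φ = c`,
`ψ = c`, and the continuation region `{gap > c}` is `(A, B)`. Since the gap is maximal at `0`,
where it equals `-r 0`, the region is empty once `c > -r 0`.
-/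

open Filter Topology

section ConvexLevelSets

open Set

variable {φ : ℝ → ℝ} {L c : ℝ}

theorem ConvexOn.le_of_tendsto_atBot_of_eq (hφ : ConvexOn ℝ univ φ)
    (hL : Tendsto φ atBot (𝓝 L)) {x y : ℝ} (hxy : x < y) (heq : φ x = φ y) : φ x ≤ L := by
  refine ge_of_tendsto hL ((eventually_lt_atBot x).mono fun w hwx => ?_)
  have hslope := hφ.slope_mono_adjacent (mem_univ w) (mem_univ y) hwx hxy
  rw [heq, sub_self, zero_div, div_le_iff₀ (sub_pos.2 hwx), zero_mul] at hslope
  linarith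

theorem Monotone.lt_of_convexOn_of_tendsto_atBot (hmono : Monotone φ) (hφ : ConvexOn ℝ univ φ)
    (hL : Tendsto φ atBot (𝓝 L)) {x y : ℝ} (hx : L < φ x) (hxy : x < y) : φ x < φ y :=
  (hmono hxy.le).lt_of_ne fun h => hx.not_ge (hφ.le_of_tendsto_atBot_of_eq hL hxy h)

theorem Monotone.exists_level_of_convexOn (hmono : Monotone φ) (hφ : ConvexOn ℝ univ φ)
    (hcont : Continuous φ) (hL : Tendsto φ atBot (𝓝 L)) (hLc : L < c) {a : ℝ} (ha : c ≤ φ a) :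
    ∃ A ≤ a, (∀ z, φ z = c ↔ z = A) ∧ (∀ z, c < φ z ↔ A < z) ∧ (∀ z, c ≤ φ z ↔ A ≤ z) := by
  obtain ⟨w, hwc, hwa⟩ : ∃ w, φ w < c ∧ w ≤ a :=
    ((hL.eventually_lt_const hLc).and (eventually_le_atBot a)).exists
  obtain ⟨A, ⟨-, hAa⟩, rfl⟩ := intermediate_value_Icc hwa hcont.continuousOn ⟨hwc.le, ha⟩
  have hstrict {x y : ℝ} (hx : φ A ≤ φ x) (hxy : x < y) : φ x < φ y :=
    hmono.lt_of_convexOn_of_tendsto_atBot hφ hL (hLc.trans_le hx) hxy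
  have hlt (z : ℝ) : φ A < φ z ↔ A < z :=
    ⟨fun hz => lt_of_not_ge fun hzA => (hmono hzA).not_gt hz, hstrict le_rfl⟩
  have hle (z : ℝ) : φ A ≤ φ z ↔ A ≤ z :=
    ⟨fun hz => le_of_not_gt fun hzA => (hstrict hz hzA).not_ge hz, (hmono ·)⟩
  refine ⟨A, hAa, fun z => ⟨fun hz => ?_, fun hzA => hzA ▸ rfl⟩, hlt, hle⟩
  exact le_antisymm (not_lt.1 ((hlt z).not.1 hz.not_gt)) ((hle z).1 hz.ge)

theorem Antitone.exists_level_of_convexOn (hanti : Antitone φ) (hφ : ConvexOn ℝ univ φ)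
    (hcont : Continuous φ) (hL : Tendsto φ atTop (𝓝 L)) (hLc : L < c) {b : ℝ} (hb : c ≤ φ b) :
    ∃ B ≥ b, (∀ z, φ z = c ↔ z = B) ∧ (∀ z, c < φ z ↔ z < B) ∧ (∀ z, c ≤ φ z ↔ z ≤ B) := by
  have hφneg : ConvexOn ℝ univ (φ ∘ Neg.neg) := by
    refine ⟨convex_univ, fun x _ y _ a b ha hb hab => ?_⟩
    simpa [smul_neg, neg_add, add_comm] using hφ.2 (mem_univ (-x)) (mem_univ (-y)) ha hb hab
  obtain ⟨A, hAb, heq, hlt, hle⟩ := (hanti.comp fun _ _ => neg_le_neg).exists_level_of_convexOn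
    hφneg (hcont.comp continuous_neg) (hL.comp tendsto_neg_atBot_atTop) hLc (a := -b) (by simpa)
  refine ⟨-A, le_neg_of_le_neg hAb, fun z => ?_, fun z => ?_, fun z => ?_⟩
  · simpa [neg_eq_iff_eq_neg] using heq (-z)
  · simpa [lt_neg] using hlt (-z)
  · simpa [le_neg] using hle (-z)

end ConvexLevelSets

theorem continuation_region_characterization_general
    (r : ℝ → ℝ) (c : ℝ) (hc : 0 < c)
    (hconc : ConcaveOn ℝ Set.univ r) (hcont : Continuous r)
    (hmono : Monotone r) (hmono2 : Monotone (fun z => z - r z))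
    (htop : Tendsto (fun z => min 0 z - r z) atTop (𝓝 0))
    (hbot : Tendsto (fun z => min 0 z - r z) atBot (𝓝 0))
    (b zn : ℝ) :
    (c + r 0 ≤ 0 →
      ∃ A B : ℝ, A ≤ 0 ∧ 0 ≤ B ∧
        c + r A = min 0 A ∧ c + r B = min 0 B ∧
        (∀ z, z ≤ 0 → c + r z = min 0 z → z = A) ∧
        (∀ z, 0 ≤ z → c + r z = min 0 z → z = B) ∧
        ((c + r (b - zn) < min 0 (b - zn)) ↔ b - zn ∈ Set.Ioo A B) ∧
        ((c + r (b - zn) ≤ min 0 (b - zn)) ↔ b - zn ∈ Set.Icc A B)) ∧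
    (0 < c + r 0 → ¬ c + r (b - zn) < min 0 (b - zn)) := by
  have hcontinue (z : ℝ) : c + r z < min 0 z ↔ c < -r z ∧ c < z - r z := by
    simp only [lt_min_iff, lt_neg_iff_add_neg, lt_sub_iff_add_lt]
  have hcontinue' (z : ℝ) : c + r z ≤ min 0 z ↔ c ≤ -r z ∧ c ≤ z - r z := by
    simp only [le_min_iff, le_neg_iff_add_nonpos_right, le_sub_iff_add_le]
  refine ⟨fun h0 => ?_, fun h0 hlt => ?_⟩
  · have hleft : Tendsto (fun z => z - r z) atBot (𝓝 0) :=
      hbot.congr' ((eventually_le_atBot 0).mono fun z hz => by rw [min_eq_right hz])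
    have hright : Tendsto (fun z => -r z) atTop (𝓝 0) :=
      htop.congr' ((eventually_ge_atTop 0).mono fun z hz => by rw [min_eq_left hz, zero_sub])
    obtain ⟨A, hA0, hAeq, hAlt, hAle⟩ := hmono2.exists_level_of_convexOn
      ((convexOn_id convex_univ).sub hconc) (continuous_id.sub hcont) hleft hc (a := 0)
      (by simp only [zero_sub]; linarith)
    obtain ⟨B, hB0, hBeq, hBlt, hBle⟩ := hmono.neg.exists_level_of_convexOn hconc.neg hcont.neg
      hright hc (b := 0) (by linarith)
    refine ⟨A, B, hA0, hB0, ?_, ?_, fun z hz hzc => (hAeq z).1 ?_, fun z hz hzc => (hBeq z).1 ?_,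
      ?_, ?_⟩
    · linarith [min_eq_right hA0, (hAeq A).2 rfl]
    · linarith [min_eq_left hB0, (hBeq B).2 rfl]
    · linarith [min_eq_right hz]
    · linarith [min_eq_left hz]
    · rw [hcontinue, and_comm, hAlt, hBlt]; rfl
    · rw [hcontinue', and_comm, hAle, hBle]; rfl
  · obtain ⟨hψ, hφ⟩ := (hcontinue _).1 hlt
    rcases le_total (b - zn) 0 with hx | hx
    · linarith [hmono2 hx]
    · linarith [hmono hx]

/-- Characterization of the continuation region for the non-truncated problem
(Theorem 4 / Corollary 3 reduction of the paper): let `r = r_n(·;c)` satisfy the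
properties of Lemma 11 and let `c > 0`. If `c + r 0 ≤ 0`, there are unique
`A ≤ 0` and `B ≥ 0` solving `c + r z = g z` on `{z ≤ 0}` and `{z ≥ 0}`, and the
conditions `g(b−zₙ) > c + r(b−zₙ)` and `g(b−zₙ) ≥ c + r(b−zₙ)` are equivalent to
`b−zₙ ∈ (A,B)` and `b−zₙ ∈ [A,B]` respectively; if `c + r 0 > 0` the
continuation region is empty. Here `g = min{0,·}`. -/
theorem continuation_region_characterization
    (r : ℝ → ℝ) (c : ℝ) (hc : 0 < c)
    (hrg : ∀ z, r z ≤ min 0 z)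
    (hconc : ConcaveOn ℝ Set.univ r) (hcont : Continuous r)
    (hmono : Monotone r) (hmono2 : Monotone (fun z => z - r z))
    (htop : Tendsto (fun z => min 0 z - r z) atTop (𝓝 0))
    (hbot : Tendsto (fun z => min 0 z - r z) atBot (𝓝 0))
    (b zn : ℝ) :
    (c + r 0 ≤ 0 →
      ∃ A B : ℝ, A ≤ 0 ∧ 0 ≤ B ∧
        c + r A = min 0 A ∧ c + r B = min 0 B ∧
        (∀ z, z ≤ 0 → c + r z = min 0 z → z = A) ∧
        (∀ z, 0 ≤ z → c + r z = min 0 z → z = B) ∧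
        ((c + r (b - zn) < min 0 (b - zn)) ↔ b - zn ∈ Set.Ioo A B) ∧
        ((c + r (b - zn) ≤ min 0 (b - zn)) ↔ b - zn ∈ Set.Icc A B)) ∧
    (0 < c + r 0 → ¬ c + r (b - zn) < min 0 (b - zn)) :=
  continuation_region_characterization_general r c hc hconc hcont hmono hmono2 htop hbot b zn
end

section
/- Finiteness of the expected sample size for interval-type stopping rules in the periodic case: Suppose the densities are T-periodic in n (f_{θ,n+T} = f_{θ,n}) and P_{θ₀}(Σ_{j=1}^T qⱼ = 0) < 1, where qⱼ = ḟ_{θ₀,j}(Xⱼ)/f_{θ₀,j}(Xⱼ) are independent scores. Let ψ be any stopping rule that continues at stage n only if Σ_{i=1}^n q_i ∈ b − Δ̄ₙ for bounded intervals Δ̄ₙ with Δ̄ₙ = Δ̄_{n+T} (periodic) and Δ̄ₙ ⊆ Δ̄ for some fixed bounded interval Δ̄. Then P_{θ₀}(τ_ψ > kT) decays exponentially in k and E_{θ₀}τ_ψ < ∞. -/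
/-!
Cut the scores into periods: the period sums `ξ_i` are i.i.d. and not a.s. zero, so for some
`ε > 0` and sign `s` the event `s ξ_i > ε` has positive probability. If it happens for `L`
consecutive periods with `L ε > 2R`, the partial sum moves by more than `2R`. Hence the sum `ζ`
over a block of `L` periods satisfies `p := P(|ζ| ≤ 2R) < 1`. While the rule continues,
`b - S_n` stays in `[-R, R]`, so every complete block after the first has `|ζ_m| ≤ 2R`, and the
blocks are i.i.d.: `P(τ > (u + 1) L T) ≤ p ^ u`. This geometric decay gives both claims.
-/

open MeasureTheory ProbabilityTheory Finset
open scoped ENNReal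

namespace ProbabilityTheory

variable {Ω : Type*} [MeasurableSpace Ω] {P : Measure Ω}

lemma iIndepFun.curry {ι κ E : Type*} [MeasurableSpace E] {X : ι → κ → Ω → E}
    (hX : ∀ i j, Measurable (X i j)) (h : iIndepFun (fun p : ι × κ ↦ X p.1 p.2) P) :
    iIndepFun (fun i ω ↦ (X i · ω)) P := by
  have := h.isProbabilityMeasure
  have _ i j := Measure.isProbabilityMeasure_map (μ := P) (hX i j).aemeasurable
  have hrow i : P.map (fun ω j ↦ X i j ω) = Measure.infinitePi (fun j ↦ P.map (X i j)) :=
    (h.precomp (Prod.mk_right_injective i)).map_fun_eq_infinitePi_map fun j ↦ hX i j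
  have hall : P.map (fun ω (p : ι × κ) ↦ X p.1 p.2 ω) =
      Measure.infinitePi (fun p ↦ P.map (X p.1 p.2)) :=
    h.map_fun_eq_infinitePi_map fun p ↦ hX p.1 p.2
  rw [iIndepFun_iff_map_fun_eq_infinitePi_map (fun i ↦ measurable_pi_iff.2 (hX i))]
  simp_rw [hrow]
  rw [← Measure.infinitePi_map_curry, ← hall, Measure.map_map (by fun_prop) (by fun_prop)]
  rfl

end ProbabilityTheory

section Blocks

variable {Ω M : Type*} [AddCommMonoid M]

def blockSum (q : ℕ → Ω → M) (B m : ℕ) (ω : Ω) : M := ∑ j ∈ range B, q (m * B + j) ω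

lemma blockSum_mul_zero (q : ℕ → Ω → M) (L T : ℕ) (ω : Ω) :
    blockSum q (L * T) 0 ω = ∑ i ∈ range L, blockSum q T i ω := by
  induction L with
  | zero => simp [blockSum]
  | succ L ih =>
    simp only [blockSum, zero_mul, zero_add] at ih ⊢
    rw [add_mul, one_mul, sum_range_add, ih, sum_range_succ]

variable [MeasurableSpace Ω] [MeasurableSpace M] [MeasurableAdd₂ M] {P : Measure Ω}
  {q : ℕ → Ω → M}

lemma measurable_blockSum (hq : ∀ j, Measurable (q j)) (B m : ℕ) :
    Measurable (blockSum q B m) :=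
  Finset.measurable_fun_sum _ fun _ _ ↦ hq _

lemma iIndepFun_blockSum (hq : ∀ j, Measurable (q j)) (hind : iIndepFun q P) (B : ℕ) :
    iIndepFun (blockSum q B) P := by
  have hinj : Function.Injective fun p : ℕ × Fin B ↦ p.1 * B + p.2 := by
    rintro ⟨m, j⟩ ⟨m', j'⟩ h
    have hB : 0 < B := j.pos
    have hdiv := congrArg (· / B) h
    have hmod := congrArg (· % B) h
    simp only [Nat.mul_comm _ B, Nat.mul_add_div hB, Nat.div_eq_of_lt j.isLt,
      Nat.div_eq_of_lt j'.isLt, Nat.mul_add_mod, Nat.mod_eq_of_lt j.isLt,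
      Nat.mod_eq_of_lt j'.isLt] at hdiv hmod
    simp_all [Fin.ext_iff]
  have hblocks := (hind.precomp hinj).curry (X := fun m (j : Fin B) ↦ q (m * B + j))
    fun _ _ ↦ hq _
  convert hblocks.comp (fun _ x ↦ ∑ j, x j)
    (fun _ ↦ Finset.measurable_sum _ fun j _ ↦ measurable_pi_apply j) using 1
  ext m ω
  simp [blockSum, Fin.sum_univ_eq_sum_range (fun j ↦ q (m * B + j) ω)]

lemma identDistrib_blockSum (hq : ∀ j, Measurable (q j)) (hind : iIndepFun q P) {B : ℕ}
    (hper : Function.Periodic (fun j ↦ P.map (q j)) B) (m : ℕ) :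
    IdentDistrib (blockSum q B m) (blockSum q B 0) P P := by
  have hshift : IdentDistrib (fun ω n ↦ q (n + m * B) ω) (fun ω n ↦ q n ω) P P :=
    IdentDistrib.pi (fun n ↦ ⟨(hq _).aemeasurable, (hq n).aemeasurable, hper.nat_mul m n⟩)
      (hind.precomp (add_left_injective (m * B))) hind
  convert hshift.comp (u := fun x : ℕ → M ↦ ∑ j ∈ range B, x j)
    (Finset.measurable_sum _ fun j _ ↦ measurable_pi_apply j) using 1 <;>
  ext ω <;> simp [blockSum, add_comm]

end Blocks

lemma measure_biInter_preimage_eq_pow {Ω β : Type*} [MeasurableSpace Ω] [MeasurableSpace β]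
    {P : Measure Ω} {Y : ℕ → Ω → β} (hind : iIndepFun Y P)
    (hid : ∀ m, IdentDistrib (Y m) (Y 0) P P) {A : Set β} (hA : MeasurableSet A)
    (s : Finset ℕ) :
    P (⋂ m ∈ s, Y m ⁻¹' A) = P (Y 0 ⁻¹' A) ^ #s := by
  rw [hind.meas_biInter fun m _ ↦ ⟨A, hA, rfl⟩, prod_congr rfl fun m _ ↦ (hid m).measure_mem_eq hA,
    prod_const]

lemma exists_measure_lt_mul_pos {Ω : Type*} [MeasurableSpace Ω] {P : Measure Ω} {X : Ω → ℝ}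
    (hX : 0 < P {ω | X ω ≠ 0}) :
    ∃ ε > 0, ∃ s : ℝ, |s| = 1 ∧ 0 < P {ω | ε < s * X ω} := by
  by_contra! h
  refine hX.ne' (measure_mono_null (t := ⋃ n : ℕ, ({ω | 1 / (n + 1 : ℝ) < 1 * X ω} ∪
    {ω | 1 / (n + 1 : ℝ) < -1 * X ω})) ?_ (measure_iUnion_null fun n ↦ ?_))
  · intro ω hω
    obtain ⟨n, hn⟩ := exists_nat_one_div_lt (abs_pos.2 hω)
    simp only [Set.mem_iUnion, Set.mem_union, Set.mem_ofPred_eq, one_mul, neg_one_mul]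
    exact ⟨n, lt_abs.1 hn⟩
  · exact measure_union_null (nonpos_iff_eq_zero.1 (h _ (by positivity) 1 abs_one))
      (nonpos_iff_eq_zero.1 (h _ (by positivity) (-1) (by simp)))

lemma exists_measure_abs_sum_range_le_lt_one {Ω : Type*} [MeasurableSpace Ω] {P : Measure Ω}
    {Y : ℕ → Ω → ℝ} (hY : ∀ i, Measurable (Y i)) (hind : iIndepFun Y P)
    (hid : ∀ i, IdentDistrib (Y i) (Y 0) P P) (h0 : P {ω | Y 0 ω = 0} < 1) (R : ℝ) :
    ∃ L > 0, P {ω | |∑ i ∈ range L, Y i ω| ≤ R} < 1 := by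
  have := hind.isProbabilityMeasure
  have hne : 0 < P {ω | Y 0 ω ≠ 0} := by
    rw [← Set.compl_ofPred, prob_compl_eq_one_sub (measurableSet_eq_fun (hY 0) measurable_const)]
    exact tsub_pos_of_lt h0
  obtain ⟨ε, hε, s, hs, hpos⟩ := exists_measure_lt_mul_pos hne
  obtain ⟨L, hL0, hL⟩ : ∃ L : ℕ, 0 < L ∧ R < L * ε := by
    obtain ⟨L, hL⟩ := exists_nat_gt (R / ε)
    refine ⟨L + 1, L.succ_pos, ?_⟩
    push_cast
    nlinarith [(div_lt_iff₀ hε).1 hL]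
  refine ⟨L, hL0, ?_⟩
  have hsub : ⋂ i ∈ range L, Y i ⁻¹' {x | ε < s * x} ⊆ {ω | R < |∑ i ∈ range L, Y i ω|} := by
    intro ω hω
    simp only [Set.mem_iInter, Set.mem_preimage, Set.mem_ofPred_eq] at hω
    have : L * ε < s * ∑ i ∈ range L, Y i ω := by
      rw [mul_sum]
      simpa using sum_lt_sum_of_nonempty (nonempty_range_iff.2 hL0.ne') hω
    calc R < L * ε := hL
      _ < s * ∑ i ∈ range L, Y i ω := this
      _ ≤ |∑ i ∈ range L, Y i ω| := by
        simpa [abs_mul, hs] using le_abs_self (s * ∑ i ∈ range L, Y i ω)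
  have hmeas : MeasurableSet {x : ℝ | ε < s * x} := measurableSet_lt measurable_const (by fun_prop)
  have hexit : 0 < P {ω | R < |∑ i ∈ range L, Y i ω|} :=
    calc 0 < P {ω | ε < s * Y 0 ω} ^ L := ENNReal.pow_pos hpos L
      _ = P (⋂ i ∈ range L, Y i ⁻¹' {x | ε < s * x}) := by
        rw [measure_biInter_preimage_eq_pow hind hid hmeas, card_range]; rfl
      _ ≤ _ := measure_mono hsub
  have hm : MeasurableSet {ω | R < |∑ i ∈ range L, Y i ω|} :=
    measurableSet_lt measurable_const (by fun_prop)
  have hcompl : {ω | |∑ i ∈ range L, Y i ω| ≤ R} = {ω | R < |∑ i ∈ range L, Y i ω|}ᶜ := by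
    ext; simp
  rw [hcompl, prob_compl_eq_one_sub hm]
  exact ENNReal.sub_lt_self ENNReal.one_ne_top one_ne_zero hexit.ne'

section StoppingRule

variable {Ω : Type*} {q : ℕ → Ω → ℝ} {b R : ℝ} {Δ : ℕ → Set ℝ} {τ : Ω → ℕ∞}

lemma sub_sum_range_mem_Icc
    (hcont : ∀ (n : ℕ) (ω : Ω), (n : ℕ∞) < τ ω → b - ∑ i ∈ range (n + 1), q i ω ∈ Δ n)
    (hΔ : ∀ n, Δ n ⊆ Set.Icc (-R) R) {n : ℕ} {ω : Ω} (hn : 0 < n) (hτ : (n : ℕ∞) ≤ τ ω) :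
    b - ∑ i ∈ range n, q i ω ∈ Set.Icc (-R) R := by
  obtain ⟨k, rfl⟩ := Nat.exists_eq_succ_of_ne_zero hn.ne'
  exact hΔ k (hcont k ω (lt_of_lt_of_le (by exact_mod_cast k.lt_succ_self) hτ))

lemma abs_blockSum_le
    (hcont : ∀ (n : ℕ) (ω : Ω), (n : ℕ∞) < τ ω → b - ∑ i ∈ range (n + 1), q i ω ∈ Δ n)
    (hΔ : ∀ n, Δ n ⊆ Set.Icc (-R) R) {B m : ℕ} {ω : Ω} (hB : 0 < B) (hm : 0 < m)
    (hτ : (((m + 1) * B : ℕ) : ℕ∞) ≤ τ ω) :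
    |blockSum q B m ω| ≤ 2 * R := by
  have hstart := sub_sum_range_mem_Icc hcont hΔ (Nat.mul_pos hm hB)
    (le_trans (by gcongr; omega) hτ)
  have hend := sub_sum_range_mem_Icc hcont hΔ (Nat.mul_pos m.succ_pos hB) hτ
  have hdiff : blockSum q B m ω =
      ∑ i ∈ range ((m + 1) * B), q i ω - ∑ i ∈ range (m * B), q i ω := by
    rw [add_one_mul, sum_range_add_sub_sum_range, blockSum]
  rw [Set.mem_Icc] at hstart hend
  rw [hdiff, abs_le]
  constructor <;> linarith

variable [MeasurableSpace Ω] {P : Measure Ω}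

lemma measure_lt_stoppingTime_le_pow (hq : ∀ j, Measurable (q j)) (hind : iIndepFun q P)
    {B : ℕ} (hB : 0 < B) (hper : Function.Periodic (fun j ↦ P.map (q j)) B)
    (hcont : ∀ (n : ℕ) (ω : Ω), (n : ℕ∞) < τ ω → b - ∑ i ∈ range (n + 1), q i ω ∈ Δ n)
    (hΔ : ∀ n, Δ n ⊆ Set.Icc (-R) R) (u : ℕ) :
    P {ω | (((u + 1) * B : ℕ) : ℕ∞) < τ ω} ≤ P {ω | |blockSum q B 0 ω| ≤ 2 * R} ^ u := by
  have hsub : {ω | (((u + 1) * B : ℕ) : ℕ∞) < τ ω} ⊆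
      ⋂ m ∈ Ioc 0 u, blockSum q B m ⁻¹' {x | |x| ≤ 2 * R} := by
    intro ω hω
    simp only [Set.mem_iInter, mem_Ioc]
    -- block `0` is left out: nothing constrains `b - S_0 = b`
    rintro m ⟨hm, hmu⟩
    exact abs_blockSum_le hcont hΔ hB hm (le_trans (by gcongr) hω.le)
  calc P {ω | (((u + 1) * B : ℕ) : ℕ∞) < τ ω}
      ≤ P (⋂ m ∈ Ioc 0 u, blockSum q B m ⁻¹' {x | |x| ≤ 2 * R}) := measure_mono hsub
    _ = P {ω | |blockSum q B 0 ω| ≤ 2 * R} ^ u := by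
      rw [measure_biInter_preimage_eq_pow (iIndepFun_blockSum hq hind B)
        (identDistrib_blockSum hq hind hper) (measurableSet_le (by fun_prop) (by fun_prop)),
        Nat.card_Ioc, Nat.sub_zero]
      rfl

end StoppingRule

lemma exists_geometric_bound_of_antitone {f : ℕ → ℝ} (hf : Antitone f) (hf0 : f 0 ≤ 1)
    {L : ℕ} (hL : 0 < L) {p : ℝ} (hp0 : 0 ≤ p) (hp1 : p < 1)
    (hstep : ∀ u, f ((u + 1) * L) ≤ p ^ u) :
    ∃ C > 0, ∃ ρ ∈ Set.Ico (0 : ℝ) 1, ∀ n, f n ≤ C * ρ ^ n := by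
  set r := max p (1 / 2)
  have hr0 : 0 < r := lt_max_of_lt_right one_half_pos
  have hr1 : r < 1 := max_lt hp1 one_half_lt_one
  set ρ := r ^ (L : ℝ)⁻¹
  have hρ0 : 0 ≤ ρ := by positivity
  have hρ1 : ρ < 1 := Real.rpow_lt_one hr0.le hr1 (by positivity)
  have hρL : ρ ^ L = r := Real.rpow_inv_natCast_pow hr0.le hL.ne'
  have hblock (u : ℕ) : f (u * L) ≤ r⁻¹ * r ^ u := by
    rcases u with _ | u
    · simpa using hf0.trans ((one_le_inv₀ hr0).2 hr1.le)
    · calc f ((u + 1) * L) ≤ p ^ u := hstep u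
        _ ≤ r ^ u := pow_le_pow_left₀ hp0 (le_max_left _ _) u
        _ = r⁻¹ * r ^ (u + 1) := by field_simp; ring
  refine ⟨r⁻¹ ^ 2, by positivity, ρ, ⟨hρ0, hρ1⟩, fun n ↦ ?_⟩
  have hpow : r ^ (n / L + 1) ≤ ρ ^ n := by
    rw [← hρL, ← pow_mul]
    exact pow_le_pow_of_le_one hρ0 hρ1.le (Nat.lt_mul_div_succ n hL).le
  calc f n ≤ f (n / L * L) := hf (Nat.div_mul_le_self n L)
    _ ≤ r⁻¹ * r ^ (n / L) := hblock _
    _ = r⁻¹ ^ 2 * r ^ (n / L + 1) := by field_simp; ring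
    _ ≤ r⁻¹ ^ 2 * ρ ^ n := by gcongr

lemma ENNReal.tsum_lt_top_of_toReal_le_geometric {a : ℕ → ℝ≥0∞} (ha : ∀ n, a n ≠ ⊤)
    {C ρ : ℝ} (hρ0 : 0 ≤ ρ) (hρ1 : ρ < 1) (h : ∀ n, (a n).toReal ≤ C * ρ ^ n) :
    ∑' n, a n < ⊤ := by
  have hsum : Summable fun n ↦ (a n).toReal :=
    .of_nonneg_of_le (fun _ ↦ ENNReal.toReal_nonneg) h
      ((summable_geometric_of_lt_one hρ0 hρ1).mul_left C)
  calc ∑' n, a n = ∑' n, ENNReal.ofReal (a n).toReal := by simp [ENNReal.ofReal_toReal (ha _)]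
    _ = ENNReal.ofReal (∑' n, (a n).toReal) :=
      (ENNReal.ofReal_tsum_of_nonneg (fun _ ↦ ENNReal.toReal_nonneg) hsum).symm
    _ < ⊤ := ENNReal.ofReal_lt_top

theorem periodic_finite_sample_size_general
    {Ω : Type*} [MeasurableSpace Ω] (P : Measure Ω) [IsProbabilityMeasure P]
    (q : ℕ → Ω → ℝ) (hqm : ∀ j, Measurable (q j))
    (hindep : ProbabilityTheory.iIndepFun q P)
    (T : ℕ) (hT : 0 < T)
    (hper : ∀ j, Measure.map (q (j + T)) P = Measure.map (q j) P)
    (hnondeg : P {ω | ∑ j ∈ Finset.range T, q j ω = 0} < 1)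
    (b R : ℝ)
    (Δ : ℕ → Set ℝ) (hΔbdd : ∀ n, Δ n ⊆ Set.Icc (-R) R)
    (τ : Ω → ℕ∞)
    (hcont : ∀ (n : ℕ) (ω : Ω), (n : ℕ∞) < τ ω → b - ∑ i ∈ Finset.range (n+1), q i ω ∈ Δ n) :
    (∃ C ρ : ℝ, 0 < C ∧ ρ ∈ Set.Ico (0:ℝ) 1 ∧
      ∀ k : ℕ, (P {ω | ((k * T : ℕ) : ℕ∞) < τ ω}).toReal ≤ C * ρ ^ k) ∧
    ∑' n : ℕ, P {ω | (n : ℕ∞) < τ ω} < ⊤ := by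
  obtain ⟨L, hL, hp⟩ := exists_measure_abs_sum_range_le_lt_one (measurable_blockSum hqm T)
    (iIndepFun_blockSum hqm hindep T) (identDistrib_blockSum hqm hindep hper)
    (by simpa [blockSum] using hnondeg) (2 * R)
  simp_rw [← blockSum_mul_zero] at hp
  have hB : 0 < L * T := Nat.mul_pos hL hT
  set f : ℕ → ℝ := fun n ↦ (P {ω | (n : ℕ∞) < τ ω}).toReal
  have hf : Antitone f := fun m n hmn ↦ ENNReal.toReal_mono (measure_ne_top P _)
    (measure_mono fun ω (hω : (n : ℕ∞) < τ ω) ↦ (Nat.cast_le.2 hmn).trans_lt hω)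
  have hstep (u : ℕ) :
      f ((u + 1) * (L * T)) ≤ (P {ω | |blockSum q (L * T) 0 ω| ≤ 2 * R}).toReal ^ u := by
    rw [← ENNReal.toReal_pow]
    exact ENNReal.toReal_mono (by finiteness) <| measure_lt_stoppingTime_le_pow hqm hindep hB
      (Function.Periodic.nat_mul (f := fun j ↦ P.map (q j)) hper L) hcont hΔbdd u
  obtain ⟨C, hC, ρ, ⟨hρ0, hρ1⟩, hbound⟩ := exists_geometric_bound_of_antitone hf
    (ENNReal.toReal_le_of_le_ofReal zero_le_one (by simpa using prob_le_one)) hB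
    ENNReal.toReal_nonneg (ENNReal.toReal_lt_of_lt_ofReal (by simpa using hp)) hstep
  refine ⟨⟨C, ρ ^ T, hC, ⟨by positivity, pow_lt_one₀ hρ0 hρ1 hT.ne'⟩,
    fun k ↦ by rw [← pow_mul, mul_comm T]; exact hbound (k * T)⟩, ?_⟩
  exact ENNReal.tsum_lt_top_of_toReal_le_geometric (fun _ ↦ measure_ne_top P _) hρ0 hρ1 hbound

/-- Finiteness of the expected sample size for interval-type stopping rules in the
periodic case: if the independent scores `qⱼ` are `T`-periodic in distribution,
`P_{θ₀}(Σ_{j<T} qⱼ = 0) < 1`, and the stopping time `τ` continues at stage `n`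
only when `b − Σ_{i≤n} qᵢ` lies in a periodic family of intervals `Δₙ` contained
in a fixed bounded interval, then `P_{θ₀}(τ > kT)` decays exponentially in `k`
and `E_{θ₀}τ < ∞`. -/
theorem periodic_finite_sample_size
    {Ω : Type*} [MeasurableSpace Ω] (P : Measure Ω) [IsProbabilityMeasure P]
    (q : ℕ → Ω → ℝ) (hqm : ∀ j, Measurable (q j))
    (hindep : ProbabilityTheory.iIndepFun q P)
    (T : ℕ) (hT : 0 < T)
    (hper : ∀ j, Measure.map (q (j + T)) P = Measure.map (q j) P)
    (hnondeg : P {ω | ∑ j ∈ Finset.range T, q j ω = 0} < 1)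
    (b R : ℝ)
    (Δ : ℕ → Set ℝ) (hΔper : ∀ n, Δ (n + T) = Δ n) (hΔbdd : ∀ n, Δ n ⊆ Set.Icc (-R) R)
    (τ : Ω → ℕ∞)
    (hcont : ∀ (n : ℕ) (ω : Ω), (n : ℕ∞) < τ ω → b - ∑ i ∈ Finset.range (n+1), q i ω ∈ Δ n) :
    (∃ C ρ : ℝ, 0 < C ∧ ρ ∈ Set.Ico (0:ℝ) 1 ∧
      ∀ k : ℕ, (P {ω | ((k * T : ℕ) : ℕ∞) < τ ω}).toReal ≤ C * ρ ^ k) ∧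
    ∑' n : ℕ, P {ω | (n : ℕ∞) < τ ω} < ⊤ :=
  periodic_finite_sample_size_general P q hqm hindep T hT hper hnondeg b R Δ hΔbdd τ hcont
end
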